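/- Let B = (G, P, ι) be an acyclic generalized Bayesian network whose initial distribution ι is a product distribution (i.e., the initial nodes are mutually independent under ι, so B is a classical Bayesian network). Then every d-separation triple of G is an independence of the standard BN semantics: d-sep(G) ⊆ Indep(dist_BN(B)). -/

import Mathlib

open Filter
open scoped Classical

noncomputable section

namespace GBNPaper

variable {V : Type} [Fintype V] [DecidableEq V]

/-- A distribution over a finite type: nonnegative values summing to one. -/
def IsDist {α : Type} [Fintype α] (μ : α → ℝ) : Prop :=
  (∀ a, 0 ≤ μ a) ∧ ∑ a, μ a = 1

/-- The set of parents of a node `X` w.r.t. an edge set `E`. -/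
def Pre (E : Finset (V × V)) (X : V) : Finset V :=
  (E.filter fun e => e.2 = X).image Prod.fst

/-- The set of initial (parentless) nodes. -/
def InitSet (E : Finset (V × V)) : Finset V :=
  Finset.univ.filter fun X => Pre E X = ∅

/-- Assignments over a subset `U` of the nodes. -/
abbrev Asg (U : Finset V) : Type := {x // x ∈ U} → Bool

/-- A full assignment `b` agrees with a partial assignment `d` on `U`. -/
abbrev Agrees (b : V → Bool) (U : Finset V) (d : Asg U) : Prop :=
  ∀ x : {x // x ∈ U}, b x.1 = d x

/-- A generalized Bayesian network over node set `V`. -/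
structure GBN (V : Type) [Fintype V] [DecidableEq V] where
  /-- the directed edges -/
  edges : Finset (V × V)
  /-- CPT entries: the probability of `X = T` given an assignment of the parents of `X` -/
  cpt : (X : V) → Asg (Pre edges X) → ℝ
  cpt_nonneg : ∀ X b, 0 ≤ cpt X b
  cpt_le_one : ∀ X b, cpt X b ≤ 1
  /-- the initial distribution over assignments of the initial nodes -/
  ι : Asg (InitSet edges) → ℝ
  ι_dist : IsDist ι

/-- Probability of an event (set of full assignments) under `μ`. -/
def probIf (μ : (V → Bool) → ℝ) (p : (V → Bool) → Prop) : ℝ :=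
  ∑ b : V → Bool, if p b then μ b else 0

/-- The marginal distribution of `μ` on `U`. -/
def marginal (μ : (V → Bool) → ℝ) (U : Finset V) : Asg U → ℝ :=
  fun d => probIf μ fun b => Agrees b U d

/-- `Pr(X = v | parents as given by b)`. -/
def copyProb (B : GBN V) (X : V) (v : Bool) (b : V → Bool) : ℝ :=
  if v then B.cpt X (fun p => b p.1) else 1 - B.cpt X (fun p => b p.1)

/-- The standard BN semantics (chain rule) of a GBN. -/
def distBN (B : GBN V) (b : V → Bool) : ℝ :=
  B.ι (fun x => b x.1) *
    ∏ X ∈ Finset.univ \ InitSet B.edges, copyProb B X (b X) b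

/-- The edge set contains no directed cycle. -/
def Acyclic (E : Finset (V × V)) : Prop :=
  ∀ x : V, ¬ Relation.TransGen (fun a b => (a, b) ∈ E) x x

/-- `C` is a cutset: every directed cycle contains a node of `C`. -/
def IsCutset (E : Finset (V × V)) (C : Finset V) : Prop :=
  ∀ x : V, ¬ Relation.TransGen (fun a b => (a, b) ∈ E ∧ a ∉ C ∧ b ∉ C) x x

/-- The standard BN semantics of the `C`-dissected GBN `B↑C↑γ`, as a joint
distribution over assignments of the original nodes `V` together with
assignments of the copies `C'` of the cutset nodes. -/
def distDissect (B : GBN V) (C : Finset V) (γ : Asg C → ℝ)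
    (b : V → Bool) (c : Asg C) : ℝ :=
  B.ι (fun x => b x.1) * γ (fun x => b x.1) *
    (∏ X ∈ (Finset.univ \ InitSet B.edges) \ C, copyProb B X (b X) b) *
    ∏ Y ∈ C.attach, copyProb B Y.1 (c Y) b

/-- `Next(B,C,γ)`: restrict `dist_BN(B↑C↑γ)` to `(V∖C) ∪ C'` and re-identify
the copies with the original cutset nodes. -/
def Next (B : GBN V) (C : Finset V) (γ : Asg C → ℝ) (a : V → Bool) : ℝ :=
  ∑ b : V → Bool,
    if ∀ x : V, x ∉ C → b x = a x then distDissect B C γ b (fun y => a y.1) else 0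

/-- `Extend(B,C,γ) = dist_BN(B↑C↑γ)|_V`. -/
def Extend (B : GBN V) (C : Finset V) (γ : Asg C → ℝ) (a : V → Bool) : ℝ :=
  ∑ c : Asg C, distDissect B C γ a c

/-- Dirac (point) distribution. -/
def DiracD {α : Type} [DecidableEq α] (b : α) : α → ℝ := fun c => if c = b then 1 else 0

/-- Transition matrix of the cutset Markov chain `M_{B↑C}`:
`P(b,c) = Next(B,C,Dirac(b))|_C (c)`. -/
def cutsetP (B : GBN V) (C : Finset V) (b c : Asg C) : ℝ :=
  marginal (Next B C (DiracD b)) C c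

/-- Vector-matrix multiplication `γ·P`. -/
def vecMul {α : Type} [Fintype α] (γ : α → ℝ) (P : α → α → ℝ) : α → ℝ :=
  fun c => ∑ b, γ b * P b c

/-- The transient distributions `γ0·P^n`. -/
def matIter {α : Type} [Fintype α] (P : α → α → ℝ) (γ0 : α → ℝ) : ℕ → (α → ℝ)
  | 0 => γ0
  | n + 1 => vecMul (matIter P γ0 n) P

/-- The sequence `γ_{n+1} = Next(B,C,γ_n)|_C`. -/
def nextSeq (B : GBN V) (C : Finset V) (γ0 : Asg C → ℝ) : ℕ → (Asg C → ℝ)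
  | 0 => γ0
  | n + 1 => marginal (Next B C (nextSeq B C γ0 n)) C

/-- Cesàro averages of a sequence of vectors. -/
def cesaro {α : Type} (f : ℕ → α → ℝ) (n : ℕ) : α → ℝ :=
  fun a => (∑ i ∈ Finset.range (n + 1), f i a) / (n + 1)

/-- The Markov chain semantics `[B]_{MC-C}`: image of
`γ0 ↦ Extend(B,C,lrf^{γ0})` over all initial cutset distributions `γ0`,
where `lrf^{γ0}` is the Cesàro limit of the transient distributions. -/
def MCSem (B : GBN V) (C : Finset V) : Set ((V → Bool) → ℝ) :=
  { μ | ∃ γ0 γ, IsDist γ0 ∧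
      Tendsto (cesaro (matIter (cutsetP B C) γ0)) atTop (nhds γ) ∧
      μ = Extend B C γ }

/-- The limit semantics `[B]_{Lim-C}`. -/
def LimSem (B : GBN V) (C : Finset V) : Set ((V → Bool) → ℝ) :=
  { μ | ∃ γ0 γ, IsDist γ0 ∧
      Tendsto (nextSeq B C γ0) atTop (nhds γ) ∧
      μ = Extend B C γ }

/-- The limit average semantics `[B]_{LimAvg-C}`. -/
def LimAvgSem (B : GBN V) (C : Finset V) : Set ((V → Bool) → ℝ) :=
  { μ | ∃ γ0 γ, IsDist γ0 ∧
      Tendsto (cesaro (nextSeq B C γ0)) atTop (nhds γ) ∧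
      μ = Extend B C γ }

/-- The Markov chain semantics in stationary-distribution form:
`{ Extend(B,C,γ) : γ a distribution with γ = γ·P }`. -/
def MCStatSem (B : GBN V) (C : Finset V) : Set ((V → Bool) → ℝ) :=
  { μ | ∃ γ : Asg C → ℝ, IsDist γ ∧ γ = vecMul γ (cutsetP B C) ∧ μ = Extend B C γ }

/-- Strong CPT-consistency of `μ` for node `X`. -/
def StrongCPT (B : GBN V) (μ : (V → Bool) → ℝ) (X : V) : Prop :=
  ∀ c : Asg (Pre B.edges X),
    probIf μ (fun f => f X = true ∧ Agrees f (Pre B.edges X) c) =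
      probIf μ (fun f => Agrees f (Pre B.edges X) c) * B.cpt X c

/-- Weak CPT-consistency of `μ` for node `X`. -/
def WeakCPT (B : GBN V) (μ : (V → Bool) → ℝ) (X : V) : Prop :=
  probIf μ (fun f => f X = true) =
    ∑ c : Asg (Pre B.edges X),
      probIf μ (fun f => Agrees f (Pre B.edges X) c) * B.cpt X c

/-- The CPT semantics `[B]_{Cpt}`. -/
def CptSem (B : GBN V) : Set ((V → Bool) → ℝ) :=
  { μ | IsDist μ ∧ marginal μ (InitSet B.edges) = B.ι ∧
      ∀ X, X ∉ InitSet B.edges → StrongCPT B μ X }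

/-- `(X ⊥ Y | Z) ∈ Indep(μ)`. -/
def IndepTriple (μ : (V → Bool) → ℝ) (X Y Z : Finset V) : Prop :=
  ∀ (a : Asg X) (b : Asg Y) (c : Asg Z),
    probIf μ (fun f => Agrees f Y b ∧ Agrees f Z c) = 0 ∨
    probIf μ (fun f => Agrees f X a ∧ Agrees f Y b ∧ Agrees f Z c) /
        probIf μ (fun f => Agrees f Y b ∧ Agrees f Z c) =
      probIf μ (fun f => Agrees f X a ∧ Agrees f Z c) /
        probIf μ (fun f => Agrees f Z c)

def PairwiseDisjoint3 (X Y Z : Finset V) : Prop :=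
  Disjoint X Y ∧ Disjoint X Z ∧ Disjoint Y Z

/-- `Indep(μ)` as a set of triples. -/
def IndepSet (μ : (V → Bool) → ℝ) : Set (Finset V × Finset V × Finset V) :=
  { t | PairwiseDisjoint3 t.1 t.2.1 t.2.2 ∧ IndepTriple μ t.1 t.2.1 t.2.2 }

/-- The CPT-I semantics `[B]_{Cpt-I}`. -/
def CptISem (B : GBN V) (I : Set (Finset V × Finset V × Finset V)) :
    Set ((V → Bool) → ℝ) :=
  { μ | μ ∈ CptSem B ∧ I ⊆ IndepSet μ }

/-! d-separation -/

def Adjacent (E : Finset (V × V)) (x y : V) : Prop := (x, y) ∈ E ∨ (y, x) ∈ E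

/-- Reachability along directed edges (including the node itself). -/
def Reaches (E : Finset (V × V)) (x y : V) : Prop :=
  Relation.ReflTransGen (fun a b => (a, b) ∈ E) x y

/-- An intermediate triple `a, w, b` on a path blocks it given `Z`:
either `w ∈ Z` and `w` lies in a chain or a fork, or `w` lies in a collider
and no node reachable from `w` (including `w`) is in `Z`. -/
def BlockedTriple (E : Finset (V × V)) (Z : Finset V) (a w b : V) : Prop :=
  (w ∈ Z ∧ (((a, w) ∈ E ∧ (w, b) ∈ E) ∨ ((b, w) ∈ E ∧ (w, a) ∈ E) ∨
      ((w, a) ∈ E ∧ (w, b) ∈ E))) ∨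
  ((a, w) ∈ E ∧ (b, w) ∈ E ∧ ∀ d, Reaches E w d → d ∉ Z)

/-- A path (as a list of nodes) is blocked given `Z`. -/
def Blocked (E : Finset (V × V)) (Z : Finset V) (W : List V) : Prop :=
  ∃ l₁ a w b l₂, W = l₁ ++ a :: w :: b :: l₂ ∧ BlockedTriple E Z a w b

/-- `x` and `y` are d-separated given `Z`: every undirected simple path
from `x` to `y` is blocked given `Z`. -/
def DSepNodes (E : Finset (V × V)) (x y : V) (Z : Finset V) : Prop :=
  ∀ W : List V, W.Chain' (Adjacent E) → W.Nodup →
    W.head? = some x → W.getLast? = some y → Blocked E Z W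

def DSep (E : Finset (V × V)) (X Y Z : Finset V) : Prop :=
  ∀ x ∈ X, ∀ y ∈ Y, DSepNodes E x y Z

/-- `d-sep(G)` as a set of triples of pairwise disjoint node sets. -/
def DSepSet (E : Finset (V × V)) : Set (Finset V × Finset V × Finset V) :=
  { t | PairwiseDisjoint3 t.1 t.2.1 t.2.2 ∧ DSep E t.1 t.2.1 t.2.2 }

/-- `Close(G)`: add an edge between every ordered pair of distinct initial nodes. -/
def Close (E : Finset (V × V)) : Finset (V × V) :=
  E ∪ ((InitSet E ×ˢ InitSet E).filter fun p => p.1 ≠ p.2)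

/-- `G[C]`: remove all edges into nodes of `C` (so the nodes of `C` are initial). -/
def CutGraph (E : Finset (V × V)) (C : Finset V) : Finset (V × V) :=
  E.filter fun e => e.2 ∉ C

/-- `ι` is a product distribution: it factorizes into its single-node marginals,
i.e. the initial nodes are mutually independent under `ι`. -/
def IsProductDist {U : Finset V} (ι : Asg U → ℝ) : Prop :=
  ∀ b : Asg U,
    ι b = ∏ x : {x // x ∈ U}, ∑ b' : Asg U, if b' x = b x then ι b' else 0

/-! Markov chain notions -/

/-- Reachability in the underlying graph of a DTMC. -/
def MCReach {α : Type} (P : α → α → ℝ) (x y : α) : Prop :=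
  Relation.ReflTransGen (fun a b => 0 < P a b) x y

/-- Bottom strongly connected component of a DTMC: nonempty, closed under
reachability, and strongly connected. -/
def IsBSCC {α : Type} (P : α → α → ℝ) (D : Set α) : Prop :=
  D.Nonempty ∧ (∀ x ∈ D, ∀ y, MCReach P x y → y ∈ D) ∧
    ∀ x ∈ D, ∀ y ∈ D, MCReach P x y

/-- Walks of a given length along positive-probability transitions. -/
def walkLen {α : Type} (P : α → α → ℝ) : ℕ → α → α → Prop
  | 0, x, y => x = y
  | n + 1, x, y => ∃ z, 0 < P x z ∧ walkLen P n z y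

/-- The lengths of the cycles of `D`. -/
def CycleLens {α : Type} (P : α → α → ℝ) (D : Set α) : Set ℕ :=
  { n | 0 < n ∧ ∃ x ∈ D, walkLen P n x x }

/-- `D` is aperiodic: the gcd of the lengths of its cycles equals 1. -/
def AperiodicBSCC {α : Type} (P : α → α → ℝ) (D : Set α) : Prop :=
  ∀ d : ℕ, (∀ n ∈ CycleLens P D, d ∣ n) → d = 1

/-- `D` is periodic: the gcd of the lengths of its cycles is greater than 1. -/
def PeriodicBSCC {α : Type} (P : α → α → ℝ) (D : Set α) : Prop :=
  ∃ d : ℕ, 1 < d ∧ ∀ n ∈ CycleLens P D, d ∣ n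

/-- A GBN is smooth if all CPT entries and all values of `ι` lie in `(0,1)`. -/
def Smooth (B : GBN V) : Prop :=
  (∀ X b, B.cpt X b ∈ Set.Ioo (0 : ℝ) 1) ∧ ∀ d, B.ι d ∈ Set.Ioo (0 : ℝ) 1


/-!
Let `An` be the set of ancestors of `X ∪ Y ∪ Z` and `R` the set of nodes outside `Z` joined to
`X` by an active trail. The heart of the graph side is that every family `{v} ∪ Pre(v)` with
`v ∈ An` either lies in `R ∪ Z` or misses `R` (d-separation implies separation in the moral
graph of `An`), while `Y` misses `R ∪ Z`.

Since `ι` is a product, `dist_BN` is a product of one factor per node, each depending only on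
the node's family and normalised in the node itself. Summing out nodes from the sinks upwards,
the marginal on the ancestral set `An` is the product of the factors of `An`, which splits as
`F · G` with `F` depending only on `R ∪ Z` and `G` only on the complement of `R`. For such a
product, swapping two assignments on `R ∪ Z` gives `P(x,y,z) P(z) = P(x,z) P(y,z)`, which is the
conditional independence.
-/

end GBNPaper

namespace GBNPaper

section Trails

variable {V : Type} {E : Finset (V × V)} {Z X : Finset V}

lemma BlockedTriple.symm {a w b : V} (h : BlockedTriple E Z a w b) :
    BlockedTriple E Z b w a := by
  unfold BlockedTriple at *
  tauto

lemma Blocked.of_reverse {W : List V} (h : Blocked E Z W.reverse) : Blocked E Z W := by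
  obtain ⟨l₁, a, w, b, l₂, hW, ht⟩ := h
  refine ⟨l₂.reverse, b, w, a, l₁.reverse, ?_, ht.symm⟩
  rw [← List.reverse_reverse W, hW]
  simp

lemma Blocked.append_left {W : List V} (l : List V) (h : Blocked E Z W) :
    Blocked E Z (l ++ W) := by
  obtain ⟨l₁, a, w, b, l₂, rfl, ht⟩ := h
  exact ⟨l ++ l₁, a, w, b, l₂, by simp, ht⟩

lemma Blocked.of_cons {a : V} {W : List V} (h : Blocked E Z (a :: W)) :
    Blocked E Z W ∨ ∃ w b l, W = w :: b :: l ∧ BlockedTriple E Z a w b := by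
  obtain ⟨_ | ⟨c, l₁⟩, a', w, b, l₂, hW, ht⟩ := h
  · obtain ⟨rfl, rfl⟩ := List.cons_eq_cons.mp hW
    exact Or.inr ⟨w, b, l₂, rfl, ht⟩
  · obtain ⟨rfl, rfl⟩ := List.cons_eq_cons.mp hW
    exact Or.inl ⟨l₁, a', w, b, l₂, rfl, ht⟩

structure IsActiveTrail (E : Finset (V × V)) (Z : Finset V) (W : List V) : Prop where
  isChain : W.IsChain (Adjacent E)
  nodup : W.Nodup
  not_blocked : ¬ Blocked E Z W

lemma IsActiveTrail.reverse {W : List V} (h : IsActiveTrail E Z W) :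
    IsActiveTrail E Z W.reverse where
  isChain := List.isChain_reverse.mpr (h.isChain.imp fun _ _ => Or.symm)
  nodup := List.nodup_reverse.mpr h.nodup
  not_blocked hb := h.not_blocked hb.of_reverse

lemma IsActiveTrail.of_append_right {l W : List V} (h : IsActiveTrail E Z (l ++ W)) :
    IsActiveTrail E Z W where
  isChain := h.isChain.right_of_append
  nodup := h.nodup.of_append_right
  not_blocked hb := h.not_blocked (hb.append_left l)

lemma IsActiveTrail.cons {u u' : V} {W : List V} (h : IsActiveTrail E Z (u :: W))
    (hu' : u' ∉ u :: W) (hadj : Adjacent E u' u)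
    (htrip : ∀ a W', W = a :: W' → ¬ BlockedTriple E Z u' u a) :
    IsActiveTrail E Z (u' :: u :: W) where
  isChain := h.isChain.cons_cons hadj
  nodup := List.nodup_cons.mpr ⟨hu', h.nodup⟩
  not_blocked hb := by
    rcases hb.of_cons with hb | ⟨w, b, l, hW, ht⟩
    · exact h.not_blocked hb
    · obtain ⟨rfl, rfl⟩ := List.cons_eq_cons.mp hW
      exact htrip b l rfl ht

/-- The trail is stored from its endpoint `u` back to its origin in `X`, so that extending it
is a `cons`. -/
def ActiveReach (E : Finset (V × V)) (Z X : Finset V) (u : V) : Prop :=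
  ∃ x ∈ X, ∃ W, IsActiveTrail E Z (u :: W) ∧ (u :: W).getLast? = some x

lemma activeReach_of_mem {u u' x : V} {W : List V} (hx : x ∈ X)
    (hW : IsActiveTrail E Z (u :: W)) (hlast : (u :: W).getLast? = some x)
    (hu' : u' ∈ u :: W) : ActiveReach E Z X u' := by
  obtain ⟨l, s, hs⟩ := List.append_of_mem hu'
  rw [hs] at hW hlast
  rw [List.getLast?_append_of_ne_nil _ (List.cons_ne_nil _ _)] at hlast
  exact ⟨x, hx, s, hW.of_append_right, hlast⟩

lemma activeReach_cons {u u' x : V} {W : List V} (hx : x ∈ X)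
    (hW : IsActiveTrail E Z (u :: W)) (hlast : (u :: W).getLast? = some x)
    (hadj : Adjacent E u' u) (htrip : ∀ a W', W = a :: W' → ¬ BlockedTriple E Z u' u a) :
    ActiveReach E Z X u' := by
  by_cases hu' : u' ∈ u :: W
  · exact activeReach_of_mem hx hW hlast hu'
  · exact ⟨x, hx, u :: W, hW.cons hu' hadj htrip, by rwa [List.getLast?_cons_cons]⟩

lemma activeReach_self {x : V} (hx : x ∈ X) : ActiveReach E Z X x := by
  refine ⟨x, hx, [], ⟨List.isChain_singleton x, List.nodup_singleton x, ?_⟩, rfl⟩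
  rintro ⟨l₁, a, w, b, l₂, h, -⟩
  have := congrArg List.length h
  simp at this
  omega

lemma not_activeReach_of_dSep {Y : Finset V} (hds : DSep E X Y Z) {y : V} (hy : y ∈ Y) :
    ¬ ActiveReach E Z X y := by
  rintro ⟨x, hx, W, hW, hlast⟩
  refine hW.reverse.not_blocked (hds x hx y hy _ hW.reverse.isChain hW.reverse.nodup ?_ ?_)
  · rw [List.head?_reverse, hlast]
  · rw [List.getLast?_reverse]
    rfl

end Trails

section Dag

variable {V : Type} {E : Finset (V × V)}

lemma Acyclic.swap_notMem (h : Acyclic E) {x y : V} (hxy : (x, y) ∈ E) : (y, x) ∉ E :=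
  fun hyx => h x ((Relation.TransGen.single hxy).tail hyx)

lemma Acyclic.ne_of_mem (h : Acyclic E) {x y : V} (hxy : (x, y) ∈ E) : x ≠ y := by
  rintro rfl
  exact h x (Relation.TransGen.single hxy)

lemma Acyclic.nodup_of_isChain (h : Acyclic E) {L : List V}
    (hL : L.IsChain fun a b => (a, b) ∈ E) : L.Nodup := by
  have : Trans (Relation.TransGen fun a b => (a, b) ∈ E) (Relation.TransGen fun a b => (a, b) ∈ E)
      (Relation.TransGen fun a b => (a, b) ∈ E) := ⟨Relation.TransGen.trans⟩
  refine List.nodup_iff_pairwise_ne.mpr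
    ((hL.imp fun _ _ h => Relation.TransGen.single h).pairwise.imp ?_)
  rintro a _ hab rfl
  exact h a hab

lemma Acyclic.exists_source [Finite V] (h : Acyclic E) {T : Finset V} (hT : T.Nonempty) :
    ∃ m ∈ T, ∀ w ∈ T, (w, m) ∉ E := by
  have : IsTrans V (Relation.TransGen fun a b => (a, b) ∈ E) := ⟨fun _ _ _ => .trans⟩
  have : Std.Irrefl (Relation.TransGen fun a b : V => (a, b) ∈ E) := ⟨h⟩
  obtain ⟨m, hm, hmin⟩ := (Finite.wellFounded_of_trans_of_irrefl
    (Relation.TransGen fun a b : V => (a, b) ∈ E)).has_min T hT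
  exact ⟨m, hm, fun w hw hwm => hmin w hw (.single hwm)⟩

variable {Z X : Finset V}

lemma not_blocked_of_isChain (hacyc : Acyclic E) {L : List V}
    (hL : L.IsChain fun a b => (a, b) ∈ E) (hZ : ∀ w ∈ L, w ∉ Z) : ¬ Blocked E Z L := by
  rintro ⟨l₁, a, w, b, l₂, rfl, ht⟩
  have hawb : [a, w, b].IsChain fun a b => (a, b) ∈ E := hL.infix ⟨l₁, l₂, by simp⟩
  simp only [List.isChain_cons_cons, List.isChain_singleton, and_true] at hawb
  rcases ht with ⟨hwZ, -⟩ | ⟨-, hbw, -⟩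
  · exact hZ w (by simp) hwZ
  · exact hacyc.swap_notMem hawb.2 hbw

lemma not_blockedTriple_of_mem (hacyc : Acyclic E) {u u' a : V} (he : (u, u') ∈ E)
    (huZ : u ∉ Z) : ¬ BlockedTriple E Z u' u a := by
  rintro (⟨hu, -⟩ | ⟨hu'u, -, -⟩)
  · exact huZ hu
  · exact hacyc.swap_notMem he hu'u

lemma BlockedTriple.of_reaches_mem (hacyc : Acyclic E) {u' v a d : V} (he : (u', v) ∈ E)
    (hvd : Reaches E v d) (hdZ : d ∈ Z) (ht : BlockedTriple E Z u' v a) :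
    v ∈ Z ∧ (v, a) ∈ E := by
  rcases ht with ⟨hvZ, ⟨-, hva⟩ | ⟨-, hvu'⟩ | ⟨hvu', -⟩⟩ | ⟨-, -, hnd⟩
  · exact ⟨hvZ, hva⟩
  · exact absurd hvu' (hacyc.swap_notMem he)
  · exact absurd hvu' (hacyc.swap_notMem he)
  · exact absurd hdZ (hnd d hvd)

lemma ActiveReach.child (hacyc : Acyclic E) {u u' : V} (h : ActiveReach E Z X u)
    (huZ : u ∉ Z) (he : (u, u') ∈ E) : ActiveReach E Z X u' := by
  obtain ⟨x, hx, W, hW, hlast⟩ := h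
  exact activeReach_cons hx hW hlast (Or.inr he)
    fun _ _ _ => not_blockedTriple_of_mem hacyc he huZ

lemma ActiveReach.descendant (hacyc : Acyclic E) {u t : V} (h : ActiveReach E Z X u)
    (hut : Reaches E u t) (hZ : ∀ d, Reaches E u d → d ∉ Z) : ActiveReach E Z X t := by
  induction hut with
  | refl => exact h
  | tail hr he ih => exact ih.child hacyc (hZ _ hr) he

lemma activeReach_of_isChain (hacyc : Acyclic E) {u x : V} {L : List V} (hx : x ∈ X)
    (hL : (u :: L).IsChain fun a b => (a, b) ∈ E) (hZ : ∀ w ∈ u :: L, w ∉ Z)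
    (hlast : (u :: L).getLast? = some x) : ActiveReach E Z X u :=
  ⟨x, hx, L, ⟨hL.imp fun _ _ => Or.inl, hacyc.nodup_of_isChain hL,
    not_blocked_of_isChain hacyc hL hZ⟩, hlast⟩

end Dag

section Ancestors

variable {V : Type} [Fintype V] {E : Finset (V × V)}

def ancestors (E : Finset (V × V)) (T : Finset V) : Finset V :=
  Finset.univ.filter fun v => ∃ t ∈ T, Reaches E v t

lemma mem_ancestors {T : Finset V} {v : V} : v ∈ ancestors E T ↔ ∃ t ∈ T, Reaches E v t := by
  simp [ancestors]

lemma subset_ancestors (T : Finset V) : T ⊆ ancestors E T :=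
  fun t ht => mem_ancestors.mpr ⟨t, ht, .refl⟩

end Ancestors

section Moral

variable {V : Type} [DecidableEq V] {E : Finset (V × V)} {X Y Z : Finset V}

def family (E : Finset (V × V)) (v : V) : Finset V := insert v (Pre E v)

lemma mem_Pre {p v : V} : p ∈ Pre E v ↔ (p, v) ∈ E := by
  simp [Pre]

lemma mem_family {u v : V} : u ∈ family E v ↔ u = v ∨ (u, v) ∈ E := by
  simp [family, mem_Pre]

variable [Fintype V]

lemma Pre_subset_ancestors {T : Finset V} {v : V} (hv : v ∈ ancestors E T) :
    Pre E v ⊆ ancestors E T := by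
  intro p hp
  obtain ⟨t, ht, hvt⟩ := mem_ancestors.mp hv
  exact mem_ancestors.mpr ⟨t, ht, .head (mem_Pre.mp hp) hvt⟩

/-- A directed path from `v` down to `X ∪ Y ∪ Z` avoids `Z`, so it cannot end in `Y` (the trail
into `v` would continue along it); it ends in `X`, and `u' → v → ⋯` is itself an active trail. -/
lemma activeReach_of_parent_of_not_reaches (hacyc : Acyclic E) (hds : DSep E X Y Z)
    {u' v : V} (hv : v ∈ ancestors E (X ∪ Y ∪ Z)) (hnd : ∀ d, Reaches E v d → d ∉ Z)
    (he : (u', v) ∈ E) (hu'Z : u' ∉ Z) (h : ActiveReach E Z X v) : ActiveReach E Z X u' := by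
  obtain ⟨t, ht, hvt⟩ := mem_ancestors.mp hv
  rcases Finset.mem_union.mp ht with hXY | htZ
  · rcases Finset.mem_union.mp hXY with htX | htY
    · obtain ⟨L, hL, hlast⟩ := List.exists_isChain_cons_of_relationReflTransGen hvt
      refine activeReach_of_isChain hacyc htX (hL.cons_cons he) ?_ ?_
      · rintro w (_ | ⟨_, hw⟩)
        · exact hu'Z
        · exact hnd w (hL.induction (Reaches E v) _ (fun _ _ hxy hx => hx.tail hxy)
            (fun _ => .refl) w hw)
      · rw [List.getLast?_cons_cons, List.getLast?_eq_some_getLast (List.cons_ne_nil _ _),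
          hlast]
    · exact absurd (h.descendant hacyc hvt hnd) (not_activeReach_of_dSep hds htY)
  · exact absurd htZ (hnd t hvt)

lemma activeReach_of_parent (hacyc : Acyclic E) (hds : DSep E X Y Z) {u' v : V}
    (hv : v ∈ ancestors E (X ∪ Y ∪ Z)) (he : (u', v) ∈ E) (hu'Z : u' ∉ Z) (hvZ : v ∉ Z)
    (h : ActiveReach E Z X v) : ActiveReach E Z X u' := by
  by_cases hnd : ∀ d, Reaches E v d → d ∉ Z
  · exact activeReach_of_parent_of_not_reaches hacyc hds hv hnd he hu'Z h
  push Not at hnd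
  obtain ⟨d, hvd, hdZ⟩ := hnd
  obtain ⟨x, hx, W, hW, hlast⟩ := h
  exact activeReach_cons hx hW hlast (Or.inl he)
    fun _ _ _ ht => hvZ (ht.of_reaches_mem hacyc he hvd hdZ).1

lemma activeReach_of_coparent (hacyc : Acyclic E) (hds : DSep E X Y Z) {u u' v : V}
    (hv : v ∈ ancestors E (X ∪ Y ∪ Z)) (huv : (u, v) ∈ E) (hu'v : (u', v) ∈ E)
    (huZ : u ∉ Z) (hu'Z : u' ∉ Z) (h : ActiveReach E Z X u) : ActiveReach E Z X u' := by
  by_cases hnd : ∀ d, Reaches E v d → d ∉ Z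
  · exact activeReach_of_parent_of_not_reaches hacyc hds hv hnd hu'v hu'Z (h.child hacyc huZ huv)
  push Not at hnd
  obtain ⟨d, hvd, hdZ⟩ := hnd
  obtain ⟨x, hx, W, hW, hlast⟩ := h
  by_cases hvW : v ∈ u :: W
  · -- Cut the trail at `v` and turn to `u'`. The turn could only be blocked by `v ∈ Z` with
    -- `v → a`, and then the trail was already blocked at `v`.
    obtain ⟨l, s, hs⟩ := List.append_of_mem hvW
    have hl : l ≠ [] := by
      rintro rfl
      exact hacyc.ne_of_mem huv (List.cons_eq_cons.mp hs).1
    obtain ⟨l, p, rfl⟩ : ∃ l' p, l = l' ++ [p] :=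
      ⟨l.dropLast, l.getLast hl, (List.dropLast_append_getLast hl).symm⟩
    rw [hs, List.append_assoc, List.singleton_append] at hW hlast
    have hps : IsActiveTrail E Z (p :: v :: s) := hW.of_append_right
    rw [List.getLast?_append_of_ne_nil _ (List.cons_ne_nil _ _), List.getLast?_cons_cons] at hlast
    refine activeReach_cons hx (hps.of_append_right (l := [p])) hlast (Or.inl hu'v) ?_
    rintro a s' rfl ht
    obtain ⟨hvZ, hva⟩ := ht.of_reaches_mem hacyc hu'v hvd hdZ
    refine hps.not_blocked ⟨[], p, v, a, s', rfl, Or.inl ⟨hvZ, ?_⟩⟩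
    rcases (List.isChain_cons_cons.mp hps.isChain).1 with hpv | hvp
    · exact Or.inl ⟨hpv, hva⟩
    · exact Or.inr (Or.inr ⟨hvp, hva⟩)
  · have hvuW := hW.cons hvW (Or.inr huv) fun _ _ _ => not_blockedTriple_of_mem hacyc huv huZ
    refine activeReach_cons hx hvuW (by rwa [List.getLast?_cons_cons]) (Or.inl hu'v) ?_
    rintro a W' haW ht
    obtain rfl := (List.cons_eq_cons.mp haW).1
    exact hacyc.swap_notMem huv (ht.of_reaches_mem hacyc hu'v hvd hdZ).2

lemma activeReach_of_mem_family (hacyc : Acyclic E) (hds : DSep E X Y Z) {u u' v : V}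
    (hv : v ∈ ancestors E (X ∪ Y ∪ Z)) (hu : u ∈ family E v) (hu' : u' ∈ family E v)
    (huZ : u ∉ Z) (hu'Z : u' ∉ Z) (h : ActiveReach E Z X u) : ActiveReach E Z X u' := by
  rw [mem_family] at hu hu'
  by_cases heq : u' = u
  · exact heq ▸ h
  by_cases huu' : (u, u') ∈ E
  · exact h.child hacyc huZ huu'
  by_cases hu'u : (u', u) ∈ E
  · have hu : u ∈ ancestors E (X ∪ Y ∪ Z) := by
      rcases hu with rfl | huv
      · exact hv
      · exact Pre_subset_ancestors hv (mem_Pre.mpr huv)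
    exact activeReach_of_parent hacyc hds hu hu'u hu'Z huZ h
  rcases hu with rfl | huv <;> rcases hu' with rfl | hu'v
  · exact absurd rfl heq
  · exact absurd hu'v hu'u
  · exact absurd huv huu'
  · exact activeReach_of_coparent hacyc hds hv huv hu'v huZ hu'Z h

lemma exists_separating_cover (hacyc : Acyclic E) (hds : DSep E X Y Z) (hYZ : Disjoint Y Z) :
    ∃ A C : Set V, ↑X ⊆ A ∧ Disjoint (↑Y) A ∧ A ∩ C ⊆ ↑Z ∧
      ∀ v ∈ ancestors E (X ∪ Y ∪ Z), ↑(family E v) ⊆ A ∨ ↑(family E v) ⊆ C := by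
  set R : Set V := {u | u ∉ Z ∧ ActiveReach E Z X u}
  refine ⟨↑Z ∪ R, Rᶜ, ?_, ?_, ?_, ?_⟩
  · intro x hx
    by_cases hxZ : x ∈ Z
    · exact Or.inl hxZ
    · exact Or.inr ⟨hxZ, activeReach_self hx⟩
  · refine Set.disjoint_left.mpr fun y hy hyA => ?_
    rcases hyA with hyZ | ⟨-, hyR⟩
    · exact Finset.disjoint_left.mp hYZ hy hyZ
    · exact not_activeReach_of_dSep hds hy hyR
  · rintro u ⟨hZ | hR, hnR⟩
    · exact hZ
    · exact absurd hR hnR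
  · intro v hv
    by_cases hmeet : ∃ u ∈ family E v, u ∈ R
    · obtain ⟨u, hu, huZ, huR⟩ := hmeet
      left
      intro u' hu'
      by_cases hu'Z : u' ∈ Z
      · exact Or.inl hu'Z
      · exact Or.inr ⟨hu'Z, activeReach_of_mem_family hacyc hds hv hu hu' huZ hu'Z huR⟩
    · exact Or.inr fun u hu hR => hmeet ⟨u, hu, hR⟩

end Moral

section Probability

variable {V : Type} [Fintype V] [DecidableEq V]

lemma probIf_congr {μ : (V → Bool) → ℝ} {p q : (V → Bool) → Prop} (h : ∀ b, p b ↔ q b) :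
    probIf μ p = probIf μ q :=
  Finset.sum_congr rfl fun b _ => if_congr (h b) rfl rfl

lemma probIf_nonneg {μ : (V → Bool) → ℝ} (hμ : ∀ b, 0 ≤ μ b) (p : (V → Bool) → Prop) :
    0 ≤ probIf μ p :=
  Finset.sum_nonneg fun b _ => by
    split_ifs
    exacts [hμ b, le_rfl]

lemma probIf_mono {μ : (V → Bool) → ℝ} (hμ : ∀ b, 0 ≤ μ b) {p q : (V → Bool) → Prop}
    (h : ∀ b, p b → q b) : probIf μ p ≤ probIf μ q := by
  refine Finset.sum_le_sum fun b _ => ?_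
  by_cases hp : p b
  · rw [if_pos hp, if_pos (h b hp)]
  · rw [if_neg hp]
    split_ifs
    exacts [hμ b, le_rfl]

lemma probIf_eq_add (μ : (V → Bool) → ℝ) (p q : (V → Bool) → Prop) :
    probIf μ p = probIf μ (fun b => p b ∧ q b) + probIf μ (fun b => p b ∧ ¬ q b) := by
  simp only [probIf, ← Finset.sum_add_distrib]
  refine Finset.sum_congr rfl fun b _ => ?_
  by_cases hp : p b <;> by_cases hq : q b <;> simp [hp, hq]

lemma probIf_mul_probIf (μ ν : (V → Bool) → ℝ) (p q : (V → Bool) → Prop) :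
    probIf μ p * probIf ν q =
      ∑ x : (V → Bool) × (V → Bool), if p x.1 ∧ q x.2 then μ x.1 * ν x.2 else 0 := by
  simp only [probIf, Finset.sum_mul_sum, ← Fintype.sum_prod_type', ite_zero_mul_ite_zero]

lemma probIf_eqOn_univ (μ : (V → Bool) → ℝ) (d : V → Bool) :
    probIf μ (fun b => Set.EqOn b d Set.univ) = μ d := by
  simp [probIf, Set.eqOn_univ]

/-- Pinning the coordinates outside `S` to those of `d` picks one representative of each
assignment on `S`. -/
lemma probIf_eqOn_eq_marginal (μ : (V → Bool) → ℝ) {U S : Set V} (hUS : U ⊆ S)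
    (d : V → Bool) :
    probIf μ (fun b => Set.EqOn b d U) =
      probIf (fun b => probIf μ fun b' => Set.EqOn b' b S) (fun b => Set.EqOn b d (U ∪ Sᶜ)) := by
  have hunique : ∀ b b', (Set.EqOn b d (U ∪ Sᶜ) ∧ Set.EqOn b' b S) ↔
      (b = S.piecewise b' d ∧ Set.EqOn b' d U) := by
    intro b b'
    constructor
    · rintro ⟨hd, hb⟩
      refine ⟨funext fun x => ?_, fun x hx => (hb (hUS hx)).trans (hd (Or.inl hx))⟩
      by_cases hx : x ∈ S
      · simp [Set.piecewise, hx, hb hx]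
      · simp [Set.piecewise, hx, hd (Or.inr hx)]
    · rintro ⟨rfl, hb'⟩
      refine ⟨Set.EqOn.union ?_ (Set.piecewise_eqOn_compl S b' d),
        (Set.piecewise_eqOn S b' d).symm⟩
      exact fun x hx => (Set.piecewise_eqOn S b' d (hUS hx)).trans (hb' hx)
  simp only [probIf]
  calc ∑ b', (if Set.EqOn b' d U then μ b' else 0)
      = ∑ b', ∑ b, if b = S.piecewise b' d ∧ Set.EqOn b' d U then μ b' else 0 := by
        refine Finset.sum_congr rfl fun b' _ => ?_
        simp only [ite_and, Finset.sum_ite_eq', Finset.mem_univ, if_true]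
    _ = ∑ b, ∑ b', if Set.EqOn b d (U ∪ Sᶜ) ∧ Set.EqOn b' b S then μ b' else 0 := by
        rw [Finset.sum_comm]
        simp only [hunique]
    _ = _ := by
        refine Finset.sum_congr rfl fun b _ => ?_
        simp only [ite_and, Finset.sum_ite_irrel, Finset.sum_const_zero]

/-- The involution `(b, b') ↦ (b on A and b' off A, b' on A and b off A)` maps the pairs counted
on the left to those counted on the right and preserves `F * G`, because `b` and `b'` agree on
`Z ⊇ A ∩ B`. -/
lemma probIf_eqOn_mul_eq_of_factorization {F G : (V → Bool) → ℝ} {A B X Y Z : Set V}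
    (hF : ∀ b b', Set.EqOn b b' A → F b = F b') (hG : ∀ b b', Set.EqOn b b' B → G b = G b')
    (hAB : A ∩ B ⊆ Z) (hXA : X ⊆ A) (hYA : Disjoint Y A) (d : V → Bool) :
    probIf (F * G) (fun b => Set.EqOn b d (X ∪ Y ∪ Z)) *
        probIf (F * G) (fun b => Set.EqOn b d Z) =
      probIf (F * G) (fun b => Set.EqOn b d (X ∪ Z)) *
        probIf (F * G) (fun b => Set.EqOn b d (Y ∪ Z)) := by
  set σ : (V → Bool) × (V → Bool) → (V → Bool) × (V → Bool) :=
    fun p => (A.piecewise p.1 p.2, A.piecewise p.2 p.1)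
  have hσ : Function.Involutive σ := by
    intro p
    ext x : 2 <;> by_cases hx : x ∈ A <;> simp [σ, Set.piecewise, hx]
  rw [probIf_mul_probIf, probIf_mul_probIf]
  refine Fintype.sum_equiv hσ.toPerm _ _ fun p => ?_
  obtain ⟨b, b'⟩ := p
  simp only [Function.Involutive.coe_toPerm, σ, Pi.mul_apply]
  have hiff : (Set.EqOn b d (X ∪ Y ∪ Z) ∧ Set.EqOn b' d Z) ↔
      (Set.EqOn (A.piecewise b b') d (X ∪ Z) ∧ Set.EqOn (A.piecewise b' b) d (Y ∪ Z)) := by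
    simp only [Set.EqOn, Set.mem_union, Set.piecewise]
    have hY : ∀ x ∈ Y, x ∉ A := fun x hx hxA => Set.disjoint_left.mp hYA hx hxA
    constructor <;> rintro ⟨hb, hb'⟩ <;> refine ⟨fun x hx => ?_, fun x hx => ?_⟩ <;>
      by_cases hxA : x ∈ A <;> grind
  by_cases hp : Set.EqOn b d (X ∪ Y ∪ Z) ∧ Set.EqOn b' d Z
  · have hbb' : Set.EqOn b b' Z := fun x hx => (hp.1 (Or.inr hx)).trans (hp.2 hx).symm
    have hpw : ∀ c c' : V → Bool, Set.EqOn c c' Z → Set.EqOn (A.piecewise c c') c' B := by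
      intro c c' hcc' x hx
      by_cases hxA : x ∈ A
      · simp [Set.piecewise, hxA, hcc' (hAB ⟨hxA, hx⟩)]
      · simp [Set.piecewise, hxA]
    simp only [hp, hiff.mp hp, and_self, if_true]
    rw [hF (A.piecewise b b') b (Set.piecewise_eqOn A b b'),
      hF (A.piecewise b' b) b' (Set.piecewise_eqOn A b' b),
      hG (A.piecewise b b') b' (hpw b b' hbb'), hG (A.piecewise b' b) b (hpw b' b hbb'.symm)]
    ring
  · simp only [hp, mt hiff.mpr hp, if_false]

end Probability

lemma eqOn_insert_update_iff {V : Type} [DecidableEq V] {b d : V → Bool} {S : Set V} {m : V}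
    (hm : m ∉ S) (t : Bool) :
    Set.EqOn b (Function.update d m t) (insert m S) ↔ Set.EqOn b d S ∧ b m = t := by
  constructor
  · intro h
    refine ⟨fun x hx => ?_, by simpa using h (Set.mem_insert m S)⟩
    rw [h (Set.mem_insert_of_mem m hx), Function.update_of_ne (ne_of_mem_of_not_mem hx hm)]
  · rintro ⟨h, rfl⟩ x (rfl | hx)
    · simp
    · rw [Function.update_of_ne (ne_of_mem_of_not_mem hx hm)]
      exact h hx

section Factorization

variable {V : Type} [Fintype V] [DecidableEq V] {E : Finset (V × V)}
  {φ : V → (V → Bool) → ℝ}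

/-- Summing out a node none of whose parents is summed out removes its factor, since each
factor is normalised in its own node. -/
lemma probIf_prod_eqOn_of_parents_subset (hacyc : Acyclic E)
    (hloc : ∀ v b b', Set.EqOn b b' ↑(family E v) → φ v b = φ v b')
    (hnorm : ∀ v b, φ v (Function.update b v true) + φ v (Function.update b v false) = 1)
    {S : Finset V} (hS : ∀ v ∈ S, Pre E v ⊆ S) (d : V → Bool) :
    probIf (fun b => ∏ v, φ v b) (fun b => Set.EqOn b d ↑S) = ∏ v ∈ S, φ v d := by
  obtain ⟨n, hn⟩ : ∃ n, Sᶜ.card = n := ⟨_, rfl⟩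
  induction n generalizing S d with
  | zero =>
    obtain rfl : S = Finset.univ := by simpa using hn
    simpa using probIf_eqOn_univ (fun b => ∏ v, φ v b) d
  | succ n ih =>
    obtain ⟨m, hm, hmin⟩ := hacyc.exists_source (Finset.card_pos.mp (by omega : 0 < Sᶜ.card))
    have hmS : m ∉ S := Finset.mem_compl.mp hm
    have hS' : ∀ v ∈ insert m S, Pre E v ⊆ insert m S := by
      intro v hv p hp
      rcases Finset.mem_insert.mp hv with rfl | hv
      · by_contra hpS
        exact hmin p (by simp_all) (mem_Pre.mp hp)
      · exact Finset.mem_insert_of_mem (hS v hv hp)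
    have hn' : (insert m S)ᶜ.card = n := by
      rw [Finset.compl_insert, Finset.card_erase_of_mem hm, hn, Nat.add_sub_cancel]
    have hfactor : ∀ t, probIf (fun b => ∏ v, φ v b) (fun b => Set.EqOn b d ↑S ∧ b m = t) =
        φ m (Function.update d m t) * ∏ v ∈ S, φ v d := by
      intro t
      have hevent : ∀ b, (Set.EqOn b d ↑S ∧ b m = t) ↔
          Set.EqOn b (Function.update d m t) ↑(insert m S) := fun b => by
        rw [Finset.coe_insert, eqOn_insert_update_iff (Finset.mem_coe.not.mpr hmS)]
      rw [probIf_congr hevent, ih hS' _ hn', Finset.prod_insert hmS]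
      congr 1
      refine Finset.prod_congr rfl fun v hv => hloc v _ _ fun x hx => ?_
      have hxS : x ∈ S := by
        rcases Finset.mem_insert.mp hx with rfl | hx
        exacts [hv, hS v hv hx]
      exact Function.update_of_ne (ne_of_mem_of_not_mem hxS hmS) _ _
    rw [probIf_eq_add _ _ (fun b => b m = true)]
    simp only [Bool.not_eq_true]
    rw [hfactor, hfactor, ← add_mul, hnorm, one_mul]

end Factorization

section BayesianNetwork

variable {V : Type} [Fintype V] [DecidableEq V] (B : GBN V)

/-- The chain-rule factor of `v`; for an initial node, the single-node marginal of `ι`. -/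
def localFactor (v : V) (b : V → Bool) : ℝ :=
  if h : v ∈ InitSet B.edges then
    ∑ b' : Asg (InitSet B.edges), if b' ⟨v, h⟩ = b v then B.ι b' else 0
  else copyProb B v (b v) b

lemma copyProb_nonneg (v : V) (t : Bool) (b : V → Bool) : 0 ≤ copyProb B v t b := by
  unfold copyProb
  split_ifs
  · exact B.cpt_nonneg _ _
  · exact sub_nonneg.mpr (B.cpt_le_one _ _)

lemma distBN_nonneg (b : V → Bool) : 0 ≤ distBN B b :=
  mul_nonneg (B.ι_dist.1 _) (Finset.prod_nonneg fun v _ => copyProb_nonneg B v _ b)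

lemma distBN_eq_prod_localFactor (hprod : IsProductDist B.ι) (b : V → Bool) :
    distBN B b = ∏ v, localFactor B v b := by
  rw [distBN, ← Finset.prod_sdiff (Finset.subset_univ (InitSet B.edges)), mul_comm, hprod,
    ← Finset.prod_coe_sort (InitSet B.edges)]
  congr 1
  · exact Finset.prod_congr rfl fun v hv => by
      rw [localFactor, dif_neg (Finset.mem_sdiff.mp hv).2]
  · exact Finset.prod_congr rfl fun v _ => by rw [localFactor, dif_pos v.2]

lemma localFactor_congr {v : V} {b b' : V → Bool}
    (h : Set.EqOn b b' ↑(family B.edges v)) : localFactor B v b = localFactor B v b' := by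
  have hv : b v = b' v := h (Finset.mem_insert_self v _)
  have hpre : (fun p : {p // p ∈ Pre B.edges v} => b p.1) = fun p => b' p.1 :=
    funext fun p => h (Finset.mem_insert_of_mem p.2)
  simp only [localFactor, copyProb, hv, hpre]

lemma localFactor_update_add (hacyc : Acyclic B.edges) (v : V) (b : V → Bool) :
    localFactor B v (Function.update b v true) + localFactor B v (Function.update b v false) =
      1 := by
  unfold localFactor
  split_ifs with hv
  · simp only [Function.update_self, ← Finset.sum_add_distrib]
    rw [← B.ι_dist.2]
    refine Finset.sum_congr rfl fun b' _ => ?_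
    cases b' ⟨v, hv⟩ <;> simp
  · have hpre : ∀ t, (fun p : {p // p ∈ Pre B.edges v} => Function.update b v t p.1) =
        fun p => b p.1 := fun t => funext fun p =>
      Function.update_of_ne (hacyc.ne_of_mem (mem_Pre.mp p.2)) _ _
    simp [copyProb, hpre]

end BayesianNetwork

section Independence

variable {V : Type}

lemma exists_agrees_of_pairwiseDisjoint3 {X Y Z : Finset V} (h : PairwiseDisjoint3 X Y Z)
    (a : Asg X) (b : Asg Y) (c : Asg Z) :
    ∃ d : V → Bool, Agrees d X a ∧ Agrees d Y b ∧ Agrees d Z c := by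
  obtain ⟨hXY, hXZ, hYZ⟩ := h
  refine ⟨fun v => if h : v ∈ X then a ⟨v, h⟩ else if h : v ∈ Y then b ⟨v, h⟩ else
    if h : v ∈ Z then c ⟨v, h⟩ else false, fun x => ?_, fun y => ?_, fun z => ?_⟩
  · simp [x.2]
  · simp [y.2, Finset.disjoint_right.mp hXY y.2]
  · simp [z.2, Finset.disjoint_right.mp hXZ z.2, Finset.disjoint_right.mp hYZ z.2]

lemma agrees_iff_eqOn {U : Finset V} {a : Asg U} {d : V → Bool} (hd : Agrees d U a)
    (f : V → Bool) : Agrees f U a ↔ Set.EqOn f d ↑U :=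
  ⟨fun h x hx => (h ⟨x, hx⟩).trans (hd ⟨x, hx⟩).symm, fun h x => (h x.2).trans (hd x)⟩

lemma indepTriple_of_eqOn_mul_eq [Fintype V] [DecidableEq V] {μ : (V → Bool) → ℝ}
    (hμ : ∀ b, 0 ≤ μ b) {X Y Z : Finset V} (hdisj : PairwiseDisjoint3 X Y Z)
    (h : ∀ d : V → Bool, probIf μ (fun f => Set.EqOn f d (↑X ∪ ↑Y ∪ ↑Z)) *
      probIf μ (fun f => Set.EqOn f d ↑Z) = probIf μ (fun f => Set.EqOn f d (↑X ∪ ↑Z)) *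
        probIf μ (fun f => Set.EqOn f d (↑Y ∪ ↑Z))) :
    IndepTriple μ X Y Z := by
  intro a b c
  obtain ⟨d, hdX, hdY, hdZ⟩ := exists_agrees_of_pairwiseDisjoint3 hdisj a b c
  simp only [agrees_iff_eqOn hdX, agrees_iff_eqOn hdY, agrees_iff_eqOn hdZ, ← Set.eqOn_union,
    ← Set.union_assoc]
  by_cases hYZ : probIf μ (fun f => Set.EqOn f d (↑Y ∪ ↑Z)) = 0
  · exact Or.inl hYZ
  have hYZ_pos := (probIf_nonneg hμ _).lt_of_ne' hYZ
  have hZ_pos := hYZ_pos.trans_le (probIf_mono hμ fun f hf => hf.mono Set.subset_union_right)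
  exact Or.inr ((div_eq_div_iff hYZ hZ_pos.ne').mpr (h d))

end Independence

theorem probIf_distBN_eqOn_mul_eq {V : Type} [Fintype V] [DecidableEq V] {B : GBN V}
    (hacyc : Acyclic B.edges) (hprod : IsProductDist B.ι) {X Y Z : Finset V}
    (hds : DSep B.edges X Y Z) (hYZ : Disjoint Y Z) (d : V → Bool) :
    probIf (distBN B) (fun f => Set.EqOn f d (↑X ∪ ↑Y ∪ ↑Z)) *
        probIf (distBN B) (fun f => Set.EqOn f d ↑Z) =
      probIf (distBN B) (fun f => Set.EqOn f d (↑X ∪ ↑Z)) *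
        probIf (distBN B) (fun f => Set.EqOn f d (↑Y ∪ ↑Z)) := by
  set An := ancestors B.edges (X ∪ Y ∪ Z)
  obtain ⟨A, C, hXA, hYA, hAC, hfam⟩ := exists_separating_cover hacyc hds hYZ
  set F : (V → Bool) → ℝ := fun b =>
    ∏ v ∈ An.filter (fun v => ↑(family B.edges v) ⊆ A), localFactor B v b
  set G : (V → Bool) → ℝ := fun b =>
    ∏ v ∈ An.filter (fun v => ¬ ↑(family B.edges v) ⊆ A), localFactor B v b
  have hF : ∀ b b', Set.EqOn b b' A → F b = F b' := fun b b' h =>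
    Finset.prod_congr rfl fun v hv => localFactor_congr B (h.mono (Finset.mem_filter.mp hv).2)
  have hG : ∀ b b', Set.EqOn b b' C → G b = G b' := fun b b' h =>
    Finset.prod_congr rfl fun v hv => localFactor_congr B
      (h.mono ((hfam v (Finset.mem_filter.mp hv).1).resolve_left (Finset.mem_filter.mp hv).2))
  have hmarg : (fun b => probIf (distBN B) fun b' => Set.EqOn b' b ↑An) = F * G := by
    funext b
    rw [funext (distBN_eq_prod_localFactor B hprod),
      probIf_prod_eqOn_of_parents_subset hacyc (fun v _ _ => localFactor_congr B)
        (localFactor_update_add B hacyc) (fun v hv => Pre_subset_ancestors hv) b,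
      Pi.mul_apply, Finset.prod_filter_mul_prod_filter_not]
  have hsub : (↑X ∪ ↑Y ∪ ↑Z : Set V) ⊆ ↑An := by
    rw [← Finset.coe_union, ← Finset.coe_union]
    exact Finset.coe_subset.mpr (subset_ancestors _)
  have hAn : ∀ U ⊆ (↑X ∪ ↑Y ∪ ↑Z : Set V), probIf (distBN B) (fun f => Set.EqOn f d U) =
      probIf (F * G) (fun f => Set.EqOn f d (U ∪ (↑An)ᶜ)) := fun U hU => by
    rw [← hmarg]
    exact probIf_eqOn_eq_marginal _ (hU.trans hsub) d
  rw [hAn _ le_rfl, hAn _ Set.subset_union_right,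
    hAn _ (Set.union_subset_union_left _ Set.subset_union_left),
    hAn _ (Set.union_subset_union_left _ Set.subset_union_right)]
  simpa only [Set.union_assoc] using probIf_eqOn_mul_eq_of_factorization (Z := ↑Z ∪ (↑An)ᶜ)
    hF hG (hAC.trans Set.subset_union_left) hXA hYA d

/-- For an acyclic GBN `B` whose initial distribution is a product
distribution (a classical BN), `d-sep(G) ⊆ Indep(dist_BN(B))`. -/
theorem stmt1 {V : Type} [Fintype V] [DecidableEq V]
    (B : GBN V) (hacyc : Acyclic B.edges) (hprod : IsProductDist B.ι) :
    DSepSet B.edges ⊆ IndepSet (distBN B) := by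
  rintro ⟨X, Y, Z⟩ ⟨hdisj, hds⟩
  exact ⟨hdisj, indepTriple_of_eqOn_mul_eq (distBN_nonneg B) hdisj
    (probIf_distBN_eqOn_mul_eq hacyc hprod hds hdisj.2.2)⟩

end GBNPaper
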